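/- Let R be a noncommutative unital ring, q a central element, and A, B, C ∈ R with AB = qBA, AC = qCA, and BC = qCB. Then for every n ≥ 0, (A + B + C)^n = ∑_{m=0}^{n} ∑_{k=0}^{m} [n; n−m, m−k, k]_q · C^{n−m} B^{m−k} A^{k}, where [n; a,b,c]_q denotes the q-trinomial coefficient [n]_q!/([a]_q![b]_q![c]_q!). -/

import Mathlib

/-- The Gaussian (q-)binomial coefficient [n choose k]_q in a ring R,
defined by the q-Pascal recurrence; for central q it agrees with
[n]_q!/([k]_q![n-k]_q!). -/
def gaussBinom {R : Type*} [Ring R] (q : R) : ℕ → ℕ → R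
  | _, 0 => 1
  | 0, _ + 1 => 0
  | n + 1, k + 1 => gaussBinom q n k + q ^ (k + 1) * gaussBinom q n (k + 1)

/-- The q-trinomial coefficient [n; a, b, n-a-b]_q = [n]_q!/([a]_q![b]_q![n-a-b]_q!),
expressed via the standard factorization [n; a, b, c]_q = [n choose a]_q · [n-a choose b]_q. -/
def qTrinom {R : Type*} [Ring R] (q : R) (n a b : ℕ) : R :=
  gaussBinom q n a * gaussBinom q (n - a) b

/-!
If `X * Y = q * (Y * X)` with `q` commuting with `X` and `Y`, then `(X + Y)^n` is the sum of
`[n choose i]_q * Y^i * X^j` over `i + j = n`: multiplying by `X + Y` on the left and moving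
`X` past `Y^i` at the cost of `q^i` reproduces the q-Pascal recurrence. Since `A + B` and `C`
q-commute in the same sense, the q-trinomial theorem follows by expanding
`((A + B) + C)^n` and then each `(A + B)^m` with this q-binomial theorem.
-/

open Finset Finset.Nat

section GaussBinom

variable {R : Type*} [Ring R]

@[simp]
theorem gaussBinom_zero_right (q : R) (n : ℕ) : gaussBinom q n 0 = 1 := by
  cases n <;> rfl

theorem gaussBinom_succ_succ (q : R) (n k : ℕ) :
    gaussBinom q (n + 1) (k + 1) = gaussBinom q n k + q ^ (k + 1) * gaussBinom q n (k + 1) :=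
  rfl

theorem gaussBinom_eq_zero_of_lt (q : R) : ∀ {n k : ℕ}, n < k → gaussBinom q n k = 0
  | 0, _ + 1, _ => rfl
  | n + 1, k + 1, h => by
    rw [gaussBinom_succ_succ, gaussBinom_eq_zero_of_lt q (by omega),
      gaussBinom_eq_zero_of_lt q (by omega), mul_zero, add_zero]

theorem Commute.gaussBinom_left {q x : R} (h : Commute q x) :
    ∀ n k : ℕ, Commute (gaussBinom q n k) x
  | _, 0 => by simp
  | 0, _ + 1 => Commute.zero_left x
  | n + 1, k + 1 => by
    rw [gaussBinom_succ_succ]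
    exact (h.gaussBinom_left n k).add_left
      ((h.pow_left _).mul_left (h.gaussBinom_left n (k + 1)))

end GaussBinom

def QCommute {R : Type*} [Ring R] (q X Y : R) : Prop :=
  X * Y = q * (Y * X)

namespace QCommute

variable {R : Type*} [Ring R] {q X Y Z : R}

theorem add_left (hX : QCommute q X Z) (hY : QCommute q Y Z) : QCommute q (X + Y) Z := by
  unfold QCommute at *
  rw [add_mul, hX, hY, mul_add, mul_add]

theorem pow_right (h : QCommute q X Y) (hqY : Commute q Y) (i : ℕ) :
    QCommute (q ^ i) X (Y ^ i) := by
  induction i with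
  | zero => simp [QCommute]
  | succ i ih =>
    unfold QCommute at *
    calc X * Y ^ (i + 1) = q ^ i * (Y ^ i * (X * Y)) := by
          rw [pow_succ, ← mul_assoc, ih, mul_assoc, mul_assoc]
      _ = q ^ (i + 1) * (Y ^ (i + 1) * X) := by
          rw [h, ← mul_assoc (Y ^ i), (hqY.pow_right i).eq.symm, pow_succ, pow_succ]
          simp only [mul_assoc]

theorem add_pow (h : QCommute q X Y) (hqX : Commute q X) (hqY : Commute q Y) (n : ℕ) :
    (X + Y) ^ n = ∑ p ∈ antidiagonal n, gaussBinom q n p.1 * (Y ^ p.1 * X ^ p.2) := by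
  induction n with
  | zero => simp
  | succ n ih =>
    have mul_term_left_X : ∀ p ∈ antidiagonal n, X * (gaussBinom q n p.1 * (Y ^ p.1 * X ^ p.2)) =
        q ^ p.1 * gaussBinom q n p.1 * (Y ^ p.1 * X ^ (p.2 + 1)) := fun p _ => by
      rw [← (hqX.gaussBinom_left n p.1).left_comm, ← mul_assoc X, h.pow_right hqY p.1,
        mul_assoc (q ^ p.1), (((Commute.refl q).pow_right p.1).gaussBinom_left n p.1).left_comm,
        mul_assoc (Y ^ p.1), ← pow_succ', mul_assoc]
    have mul_term_left_Y : ∀ p ∈ antidiagonal n, Y * (gaussBinom q n p.1 * (Y ^ p.1 * X ^ p.2)) =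
        gaussBinom q n p.1 * (Y ^ (p.1 + 1) * X ^ p.2) := fun p _ => by
      rw [← (hqY.gaussBinom_left n p.1).left_comm, ← mul_assoc Y, pow_succ']
    -- Both shifts are read off one sum over `antidiagonal (n + 1)`, whose term `(n + 1, 0)` is zero.
    have shift : ∑ p ∈ antidiagonal n, q ^ p.1 * gaussBinom q n p.1 * (Y ^ p.1 * X ^ (p.2 + 1)) =
        X ^ (n + 1) + ∑ p ∈ antidiagonal n,
          q ^ (p.1 + 1) * gaussBinom q n (p.1 + 1) * (Y ^ (p.1 + 1) * X ^ p.2) := by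
      have key := (sum_antidiagonal_succ (n := n) (f := fun p : ℕ × ℕ =>
        q ^ p.1 * gaussBinom q n p.1 * (Y ^ p.1 * X ^ p.2))).symm.trans sum_antidiagonal_succ'
      simpa [gaussBinom_eq_zero_of_lt q (Nat.lt_succ_self n)] using key.symm
    rw [pow_succ', ih, mul_sum]
    simp only [add_mul]
    rw [sum_add_distrib, sum_congr rfl mul_term_left_X, sum_congr rfl mul_term_left_Y, shift,
      sum_antidiagonal_succ]
    simp only [gaussBinom_succ_succ, add_mul, sum_add_distrib, gaussBinom_zero_right, pow_zero,
      one_mul]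
    abel

end QCommute

/-- The q-trinomial theorem: if q is central and AB = qBA, AC = qCA, BC = qCB, then
(A + B + C)^n = ∑_{m=0}^n ∑_{k=0}^m [n; n-m, m-k, k]_q · C^{n-m} B^{m-k} A^k. -/
theorem q_trinomial_theorem {R : Type*} [Ring R] (q A B C : R)
    (hq : ∀ x : R, q * x = x * q)
    (hAB : A * B = q * (B * A)) (hAC : A * C = q * (C * A))
    (hBC : B * C = q * (C * B)) (n : ℕ) :
    (A + B + C) ^ n =
      ∑ m ∈ Finset.range (n + 1), ∑ k ∈ Finset.range (m + 1),
        qTrinom q n (n - m) (m - k) * (C ^ (n - m) * (B ^ (m - k) * A ^ k)) := by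
  have hq' : ∀ x, Commute q x := hq
  have hAB_C : QCommute q (A + B) C := QCommute.add_left hAC hBC
  rw [hAB_C.add_pow (hq' _) (hq' _), ← sum_antidiagonal_swap, sum_antidiagonal_eq_sum_range_succ_mk]
  refine sum_congr rfl fun m hm => ?_
  have hmn : n - (n - m) = m := by have := mem_range.mp hm; omega
  rw [Prod.swap_prod_mk, (show QCommute q A B from hAB).add_pow (hq' _) (hq' _),
    ← sum_antidiagonal_swap, sum_antidiagonal_eq_sum_range_succ_mk, mul_sum, mul_sum]
  refine sum_congr rfl fun k _ => ?_
  rw [Prod.swap_prod_mk, qTrinom, hmn,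
    ← ((hq' (C ^ (n - m))).gaussBinom_left m (m - k)).left_comm, mul_assoc]
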